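/- Let k = [k(i,j)] be an infinite nonnegative matrix with ‖k‖_∞ = sup{k(i,j) : i,j ∈ ℕ} < ∞, and let A be the operator on ℓ∞ defined by (Af)(i) = sup{k(i,j)f(j) : j ∈ ℕ}. Then A maps ℓ∞ into ℓ∞, maps the nonnegative cone Z = ℓ∞₊ into itself, and on Z one has ‖A‖_LIP = ‖A‖ = ‖k‖_∞, where ‖A‖ = sup{‖Af‖_∞/‖f‖_∞ : f ∈ Z, f ≠ 0} and ‖A‖_LIP = sup{‖Af − Ag‖_∞/‖f − g‖_∞ : f, g ∈ Z, f ≠ g}. -/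
import Mathlib


/-- A real sequence is bounded (i.e. belongs to `ℓ∞`). -/
def IsBddSeq (f : ℕ → ℝ) : Prop := ∃ c : ℝ, ∀ j, |f j| ≤ c

/-- The sup-kernel operator `(Af)(i) = sup {k(i,j) f(j) : j ∈ ℕ}`. -/
noncomputable def supKernelOp (k : ℕ → ℕ → ℝ) (f : ℕ → ℝ) : ℕ → ℝ :=
  fun i => ⨆ j, k i j * f j

/-- The supremum norm `‖f‖_∞ = sup {|f(j)| : j ∈ ℕ}`. -/
noncomputable def supNorm (f : ℕ → ℝ) : ℝ := ⨆ j, |f j|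

/-- Let `k` be an infinite nonnegative matrix with
`‖k‖_∞ = sup {k(i,j) : i, j ∈ ℕ} < ∞`, and let `A` on `ℓ∞` be defined by
`(Af)(i) = sup {k(i,j) f(j) : j ∈ ℕ}`.  Then `A` maps `ℓ∞` into `ℓ∞`, maps the nonnegative
cone `Z = ℓ∞₊` into itself, and on `Z` one has `‖A‖_LIP = ‖A‖ = ‖k‖_∞`, where
`‖A‖ = sup {‖Af‖_∞/‖f‖_∞ : f ∈ Z, f ≠ 0}` and
`‖A‖_LIP = sup {‖Af - Ag‖_∞/‖f - g‖_∞ : f, g ∈ Z, f ≠ g}`. -/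
theorem supKernelOp_linfty_lipschitz_seminorm_eq_norm_eq_sup_matrix
    (k : ℕ → ℕ → ℝ)
    (hk_nonneg : ∀ i j, 0 ≤ k i j)
    (hk_bdd : ∃ K : ℝ, ∀ i j, k i j ≤ K) :
    -- `A` maps `ℓ∞` into `ℓ∞`
    (∀ f : ℕ → ℝ, IsBddSeq f → IsBddSeq (supKernelOp k f)) ∧
    -- `A` maps `Z = ℓ∞₊` into itself
    (∀ f : ℕ → ℝ, IsBddSeq f → (∀ j, 0 ≤ f j) → ∀ i, 0 ≤ supKernelOp k f i) ∧
    -- `‖A‖_LIP = ‖k‖_∞`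
    sSup {r : ℝ | ∃ f g : ℕ → ℝ, IsBddSeq f ∧ (∀ j, 0 ≤ f j) ∧ IsBddSeq g ∧ (∀ j, 0 ≤ g j) ∧
        f ≠ g ∧ r = supNorm (supKernelOp k f - supKernelOp k g) / supNorm (f - g)} =
      (⨆ p : ℕ × ℕ, k p.1 p.2) ∧
    -- `‖A‖ = ‖k‖_∞`
    sSup {r : ℝ | ∃ f : ℕ → ℝ, IsBddSeq f ∧ (∀ j, 0 ≤ f j) ∧ f ≠ 0 ∧
        r = supNorm (supKernelOp k f) / supNorm f} =
      (⨆ p : ℕ × ℕ, k p.1 p.2) := by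
  obtain ⟨K, hK⟩ := hk_bdd
  have hK0 : 0 ≤ K := (hk_nonneg 0 0).trans (hK 0 0)
  have hbddk : BddAbove (Set.range fun p : ℕ × ℕ => k p.1 p.2) :=
    ⟨K, by rintro x ⟨p, rfl⟩; exact hK p.1 p.2⟩
  set S := ⨆ p : ℕ × ℕ, k p.1 p.2 with hSdef
  have hkS : ∀ i j, k i j ≤ S := fun i j => le_ciSup hbddk (i, j)
  have hS0 : 0 ≤ S := (hk_nonneg 0 0).trans (hkS 0 0)
  have hbddabs : ∀ f : ℕ → ℝ, IsBddSeq f → BddAbove (Set.range fun j => |f j|) := by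
    rintro f ⟨c, hc⟩; exact ⟨c, by rintro x ⟨j, rfl⟩; exact hc j⟩
  have habs_le : ∀ f : ℕ → ℝ, IsBddSeq f → ∀ j, |f j| ≤ supNorm f :=
    fun f hf j => le_ciSup (hbddabs f hf) j
  have hsn_nonneg : ∀ f : ℕ → ℝ, IsBddSeq f → 0 ≤ supNorm f :=
    fun f hf => (abs_nonneg (f 0)).trans (habs_le f hf 0)
  have hsn_le : ∀ (f : ℕ → ℝ) (c : ℝ), (∀ j, |f j| ≤ c) → supNorm f ≤ c :=
    fun f c hc => ciSup_le hc
  have hterm_bdd : ∀ (f : ℕ → ℝ), IsBddSeq f → ∀ i,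
      BddAbove (Set.range fun j => k i j * f j) := by
    rintro f ⟨c, hc⟩ i
    refine ⟨K * c, ?_⟩
    rintro x ⟨j, rfl⟩
    calc k i j * f j ≤ k i j * |f j| :=
          mul_le_mul_of_nonneg_left (le_abs_self _) (hk_nonneg i j)
      _ ≤ K * c := mul_le_mul (hK i j) (hc j) (abs_nonneg _) hK0
  -- Part 1
  have hAcont : ∀ f : ℕ → ℝ, IsBddSeq f → IsBddSeq (supKernelOp k f) := by
    rintro f hfb
    obtain ⟨c, hc⟩ := hfb
    refine ⟨K * c, fun i => abs_le.mpr ⟨?_, ?_⟩⟩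
    · have h1 : -(K * c) ≤ k i 0 * f 0 := by
        have h0 := hk_nonneg i 0
        have h2 : k i 0 * |f 0| ≤ K * c :=
          mul_le_mul (hK i 0) (hc 0) (abs_nonneg _) hK0
        nlinarith [neg_abs_le (f 0), abs_nonneg (f 0)]
      exact h1.trans (le_ciSup (hterm_bdd f ⟨c, hc⟩ i) 0)
    · refine ciSup_le fun j => ?_
      calc k i j * f j ≤ k i j * |f j| :=
            mul_le_mul_of_nonneg_left (le_abs_self _) (hk_nonneg i j)
        _ ≤ K * c := mul_le_mul (hK i j) (hc j) (abs_nonneg _) hK0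
  -- Part 2
  have hApos : ∀ f : ℕ → ℝ, IsBddSeq f → (∀ j, 0 ≤ f j) → ∀ i, 0 ≤ supKernelOp k f i := by
    intro f hfb hfp i
    exact (mul_nonneg (hk_nonneg i 0) (hfp 0)).trans (le_ciSup (hterm_bdd f hfb i) 0)
  have hsub : ∀ f g : ℕ → ℝ, IsBddSeq f → IsBddSeq g → IsBddSeq (f - g) := by
    rintro f g ⟨c, hc⟩ ⟨d, hd⟩
    refine ⟨c + d, fun j => ?_⟩
    have : |f j - g j| ≤ |f j| + |g j| := abs_sub _ _
    simp only [Pi.sub_apply]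
    linarith [hc j, hd j]
  -- key pointwise Lipschitz bound
  have hkey : ∀ f g : ℕ → ℝ, IsBddSeq f → IsBddSeq g →
      ∀ i, supKernelOp k f i ≤ supKernelOp k g i + S * supNorm (f - g) := by
    intro f g hf hg i
    refine ciSup_le fun j => ?_
    have h3 : |f j - g j| ≤ supNorm (f - g) := by
      have := habs_le (f - g) (hsub f g hf hg) j
      simpa using this
    have h2 : k i j * |f j - g j| ≤ S * supNorm (f - g) :=
      mul_le_mul (hkS i j) h3 (abs_nonneg _) hS0
    have h4 : k i j * g j ≤ supKernelOp k g i := le_ciSup (hterm_bdd g hg i) j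
    have h1 : k i j * f j ≤ k i j * g j + k i j * |f j - g j| := by
      have h0 := hk_nonneg i j
      nlinarith [le_abs_self (f j - g j)]
    linarith
  have hsn_symm : ∀ f g : ℕ → ℝ, supNorm (f - g) = supNorm (g - f) := by
    intro f g
    unfold supNorm
    congr 1; funext j; simp [abs_sub_comm]
  have hLipBound : ∀ f g : ℕ → ℝ, IsBddSeq f → IsBddSeq g →
      supNorm (supKernelOp k f - supKernelOp k g) ≤ S * supNorm (f - g) := by
    intro f g hf hg
    refine hsn_le _ _ fun i => ?_
    have h1 := hkey f g hf hg i
    have h2 := hkey g f hg hf i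
    rw [hsn_symm g f] at h2
    simp only [Pi.sub_apply]
    rw [abs_le]
    constructor <;> linarith
  -- supKernelOp of 0 is 0
  have h0b : IsBddSeq (0 : ℕ → ℝ) := ⟨0, by simp⟩
  have hA0 : supKernelOp k (0 : ℕ → ℝ) = 0 := by
    funext i
    unfold supKernelOp
    simp [ciSup_const]
  -- norm bound
  have hNormBound : ∀ f : ℕ → ℝ, IsBddSeq f →
      supNorm (supKernelOp k f) ≤ S * supNorm f := by
    intro f hf
    have := hLipBound f 0 hf h0b
    rw [hA0, sub_zero, sub_zero] at this
    exact this
  -- the constant one sequence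
  have hone : IsBddSeq (fun _ : ℕ => (1 : ℝ)) := ⟨1, by simp⟩
  have hone_pos : ∀ j : ℕ, 0 ≤ (fun _ : ℕ => (1 : ℝ)) j := fun _ => zero_le_one
  have hsn1 : supNorm (fun _ : ℕ => (1 : ℝ)) = 1 := by
    unfold supNorm; simp [ciSup_const]
  have hA1 : ∀ i, supKernelOp k (fun _ : ℕ => (1 : ℝ)) i = ⨆ j, k i j := by
    intro i; unfold supKernelOp; simp
  have hinner_bdd : ∀ i, BddAbove (Set.range fun j => k i j) :=
    fun i => ⟨K, by rintro x ⟨j, rfl⟩; exact hK i j⟩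
  have hinner_nonneg : ∀ i, 0 ≤ ⨆ j, k i j :=
    fun i => (hk_nonneg i 0).trans (le_ciSup (hinner_bdd i) 0)
  have hsnA1 : supNorm (supKernelOp k (fun _ : ℕ => (1 : ℝ))) = S := by
    apply le_antisymm
    · refine hsn_le _ _ fun i => ?_
      rw [hA1 i, abs_of_nonneg (hinner_nonneg i)]
      exact ciSup_le fun j => hkS i j
    · refine ciSup_le fun p => ?_
      calc k p.1 p.2 ≤ ⨆ j, k p.1 j := le_ciSup (hinner_bdd p.1) p.2
        _ ≤ |supKernelOp k (fun _ : ℕ => (1 : ℝ)) p.1| := by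
            rw [hA1]; exact le_abs_self _
        _ ≤ supNorm (supKernelOp k (fun _ : ℕ => (1 : ℝ))) :=
            habs_le _ (hAcont _ hone) p.1
  have hone_ne : (fun _ : ℕ => (1 : ℝ)) ≠ 0 := by
    intro h
    have := congrFun h 0
    simp at this
  -- positivity of supNorm of a nonzero difference
  have hsn_pos : ∀ f g : ℕ → ℝ, IsBddSeq f → IsBddSeq g → f ≠ g → 0 < supNorm (f - g) := by
    intro f g hf hg hne
    obtain ⟨j, hj⟩ := Function.ne_iff.mp hne
    have h1 : 0 < |f j - g j| := abs_pos.mpr (sub_ne_zero.mpr hj)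
    have := habs_le (f - g) (hsub f g hf hg) j
    simp only [Pi.sub_apply] at this
    linarith
  refine ⟨hAcont, hApos, ?_, ?_⟩
  · -- Lipschitz seminorm
    apply le_antisymm
    · refine csSup_le ⟨S, ?_⟩ ?_
      · exact ⟨(fun _ => 1), 0, hone, hone_pos, h0b, fun j => le_refl 0, hone_ne, by
          rw [sub_zero, hA0, sub_zero, hsnA1, hsn1, div_one]⟩
      · rintro r ⟨f, g, hf, hfp, hg, hgp, hne, rfl⟩
        have hpos := hsn_pos f g hf hg hne
        rw [div_le_iff₀ hpos]
        calc supNorm (supKernelOp k f - supKernelOp k g) ≤ S * supNorm (f - g) :=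
              hLipBound f g hf hg
          _ = S * supNorm (f - g) := rfl
    · apply le_csSup
      · refine ⟨S, ?_⟩
        rintro r ⟨f, g, hf, hfp, hg, hgp, hne, rfl⟩
        have hpos := hsn_pos f g hf hg hne
        rw [div_le_iff₀ hpos]
        exact hLipBound f g hf hg
      · exact ⟨(fun _ => 1), 0, hone, hone_pos, h0b, fun j => le_refl 0, hone_ne, by
          rw [sub_zero, hA0, sub_zero, hsnA1, hsn1, div_one]⟩
  · -- operator norm
    apply le_antisymm
    · refine csSup_le ⟨S, ?_⟩ ?_
      · exact ⟨(fun _ => 1), hone, hone_pos, hone_ne, by rw [hsnA1, hsn1, div_one]⟩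
      · rintro r ⟨f, hf, hfp, hne, rfl⟩
        have hpos : 0 < supNorm f := by
          have := hsn_pos f 0 hf h0b hne
          rwa [sub_zero] at this
        rw [div_le_iff₀ hpos]
        exact hNormBound f hf
    · apply le_csSup
      · refine ⟨S, ?_⟩
        rintro r ⟨f, hf, hfp, hne, rfl⟩
        have hpos : 0 < supNorm f := by
          have := hsn_pos f 0 hf h0b hne
          rwa [sub_zero] at this
        rw [div_le_iff₀ hpos]
        exact hNormBound f hf
      · exact ⟨(fun _ => 1), hone, hone_pos, hone_ne, by rw [hsnA1, hsn1, div_one]⟩
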